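/- For the Kaczmarz-Tanabe iteration y_{k+1} = Q y_k + A_S^T M b applied to a consistent system, the error e_k = y_k - x† - P_{N(A)} y_0 satisfies ||e_{k+1}||_2 ≤ σ_max ||e_k||_2 and hence ||e_k||_2 ≤ σ_max^k ||e_0||_2, where σ_max is the maximum singular value of Q strictly between 0 and 1; in particular y_k → x† + P_{N(A)} y_0. -/
import Mathlib


open Matrix Filter

noncomputable def projMat {n : ℕ} (a : Fin n → ℝ) : Matrix (Fin n) (Fin n) ℝ :=
  1 - (a ⬝ᵥ a)⁻¹ • Matrix.vecMulVec a a

noncomputable def vnorm {n : ℕ} (x : Fin n → ℝ) : ℝ := Real.sqrt (x ⬝ᵥ x)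

/-- `x ∈ N(A)^⊥`: `x` is orthogonal to every vector of the null space of `A`. -/
def inNullPerp {m n : ℕ} (A : Matrix (Fin m) (Fin n) ℝ) (x : Fin n → ℝ) : Prop :=
  ∀ z : Fin n → ℝ, A.mulVec z = 0 → x ⬝ᵥ z = 0

/-- `P_k` (0-indexed): the projection onto the hyperplane orthogonal to row `k` of `A`. -/
noncomputable def Pnat {m n : ℕ} (A : Matrix (Fin m) (Fin n) ℝ) (k : ℕ) :
    Matrix (Fin n) (Fin n) ℝ :=
  if h : k < m then projMat (A ⟨k, h⟩) else 1

/-- descending product `f (lo+len-1) * ⋯ * f (lo+1) * f lo` -/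
noncomputable def prodDesc {α : Type*} [Monoid α] (f : ℕ → α) (lo : ℕ) : ℕ → α
  | 0 => 1
  | k + 1 => f (lo + k) * prodDesc f lo k

/-- ascending product `f lo * f (lo+1) * ⋯ * f (lo+len-1)` -/
noncomputable def prodAsc {α : Type*} [Monoid α] (f : ℕ → α) (lo : ℕ) : ℕ → α
  | 0 => 1
  | k + 1 => prodAsc f lo k * f (lo + k)

/-- `Q_j = P_m ⋯ P_{j+1}` (paper indices); here `j : Fin m` is 0-indexed. -/
noncomputable def Qmat {m n : ℕ} (A : Matrix (Fin m) (Fin n) ℝ) (j : Fin m) :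
    Matrix (Fin n) (Fin n) ℝ :=
  prodDesc (Pnat A) ((j : ℕ) + 1) (m - 1 - (j : ℕ))

/-- `Q = P_m P_{m-1} ⋯ P_1`. -/
noncomputable def Qfull {m n : ℕ} (A : Matrix (Fin m) (Fin n) ℝ) : Matrix (Fin n) (Fin n) ℝ :=
  prodDesc (Pnat A) 0 m

/-- `A_S = (Q_1 a_1, …, Q_m a_m)ᵀ`. -/
noncomputable def ASmat {m n : ℕ} (A : Matrix (Fin m) (Fin n) ℝ) : Matrix (Fin m) (Fin n) ℝ :=
  fun i => (Qmat A i).mulVec (A i)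

/-- `M = diag (1/‖a_1‖², …, 1/‖a_m‖²)`. -/
noncomputable def Mdiag {m n : ℕ} (A : Matrix (Fin m) (Fin n) ℝ) : Matrix (Fin m) (Fin m) ℝ :=
  Matrix.diagonal fun i => (A i ⬝ᵥ A i)⁻¹

/-- `Q̄_1 = Q̄_m = 0`, `Q̄_2 = I`, `Q̄_i = P_2 ⋯ P_{i-1}` (paper indices); `i : Fin m` 0-indexed. -/
noncomputable def barQmat {m n : ℕ} (A : Matrix (Fin m) (Fin n) ℝ) (i : Fin m) :
    Matrix (Fin n) (Fin n) ℝ :=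
  if (i : ℕ) = 0 ∨ (i : ℕ) = m - 1 then 0 else prodAsc (Pnat A) 1 ((i : ℕ) - 1)

/-- `Q̄ = P_2 P_3 ⋯ P_{m-1}`. -/
noncomputable def barQfull {m n : ℕ} (A : Matrix (Fin m) (Fin n) ℝ) : Matrix (Fin n) (Fin n) ℝ :=
  prodAsc (Pnat A) 1 (m - 2)

/-- `Ā_S = (Q̄_1 a_1, …, Q̄_m a_m)ᵀ`. -/
noncomputable def barASmat {m n : ℕ} (A : Matrix (Fin m) (Fin n) ℝ) : Matrix (Fin m) (Fin n) ℝ :=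
  fun i => (barQmat A i).mulVec (A i)

/-- `h_{p,q} = a_pᵀ a_q / ‖a_q‖²`. -/
noncomputable def hcoef {m n : ℕ} (A : Matrix (Fin m) (Fin n) ℝ) (p q : Fin m) : ℝ :=
  (A p ⬝ᵥ A q) / (A q ⬝ᵥ A q)


lemma projMat_mulVec' {n : ℕ} (a x : Fin n → ℝ) :
    (projMat a).mulVec x = x - ((a ⬝ᵥ a)⁻¹ * (a ⬝ᵥ x)) • a := by
  unfold projMat
  rw [Matrix.sub_mulVec, Matrix.smul_mulVec, Matrix.one_mulVec]
  congr 1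
  funext j
  simp only [Pi.smul_apply, smul_eq_mul, Matrix.mulVec, Matrix.vecMulVec_apply, dotProduct]
  rw [Finset.mul_sum, mul_assoc, Finset.sum_mul, Finset.mul_sum]
  apply Finset.sum_congr rfl
  intro i _
  ring

lemma Pnat_mulVec_fixed {m n : ℕ} (A : Matrix (Fin m) (Fin n) ℝ) {z : Fin n → ℝ}
    (hz : A.mulVec z = 0) (k : ℕ) : (Pnat A k).mulVec z = z := by
  unfold Pnat
  split
  · next h =>
    rw [projMat_mulVec']
    have hd : A ⟨k, h⟩ ⬝ᵥ z = 0 := by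
      have := congrFun hz ⟨k, h⟩
      simpa [Matrix.mulVec] using this
    simp [hd]
  · exact Matrix.one_mulVec z

lemma Pnat_dot_perp {m n : ℕ} (A : Matrix (Fin m) (Fin n) ℝ) {z : Fin n → ℝ}
    (hz : A.mulVec z = 0) (k : ℕ) (w : Fin n → ℝ) :
    ((Pnat A k).mulVec w) ⬝ᵥ z = w ⬝ᵥ z := by
  unfold Pnat
  split
  · next h =>
    rw [projMat_mulVec', sub_dotProduct, smul_dotProduct]
    have hd : A ⟨k, h⟩ ⬝ᵥ z = 0 := by
      have := congrFun hz ⟨k, h⟩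
      simpa [Matrix.mulVec] using this
    simp [hd]
  · rw [Matrix.one_mulVec]

lemma prodDesc_mulVec_fixed {m n : ℕ} (A : Matrix (Fin m) (Fin n) ℝ) {z : Fin n → ℝ}
    (hz : A.mulVec z = 0) : ∀ (k lo : ℕ), (prodDesc (Pnat A) lo k).mulVec z = z
  | 0, lo => Matrix.one_mulVec z
  | k + 1, lo => by
    show ((Pnat A (lo + k)) * prodDesc (Pnat A) lo k).mulVec z = z
    rw [← Matrix.mulVec_mulVec, prodDesc_mulVec_fixed A hz k lo, Pnat_mulVec_fixed A hz]

lemma prodDesc_dot_perp {m n : ℕ} (A : Matrix (Fin m) (Fin n) ℝ) {z : Fin n → ℝ}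
    (hz : A.mulVec z = 0) (w : Fin n → ℝ) :
    ∀ (k lo : ℕ), ((prodDesc (Pnat A) lo k).mulVec w) ⬝ᵥ z = w ⬝ᵥ z
  | 0, lo => by rw [show prodDesc (Pnat A) lo 0 = 1 from rfl, Matrix.one_mulVec]
  | k + 1, lo => by
    show (((Pnat A (lo + k)) * prodDesc (Pnat A) lo k).mulVec w) ⬝ᵥ z = w ⬝ᵥ z
    rw [← Matrix.mulVec_mulVec, Pnat_dot_perp A hz, prodDesc_dot_perp A hz w k lo]

/-- the `i`-th correction vector `(1/‖a_i‖²) b_i • a_i` (as an ℕ-indexed family). -/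
noncomputable def gvec {m n : ℕ} (A : Matrix (Fin m) (Fin n) ℝ) (b : Fin m → ℝ) (i : ℕ) :
    Fin n → ℝ :=
  if h : i < m then ((A ⟨i, h⟩ ⬝ᵥ A ⟨i, h⟩)⁻¹ * b ⟨i, h⟩) • A ⟨i, h⟩ else 0

lemma sweep {m n : ℕ} (A : Matrix (Fin m) (Fin n) ℝ) (b : Fin m → ℝ) (xd : Fin n → ℝ)
    (hxd : A.mulVec xd = b) :
    ∀ t, t ≤ m →
      (prodDesc (Pnat A) 0 t).mulVec xd
        + ∑ i ∈ Finset.range t, (prodDesc (Pnat A) (i + 1) (t - 1 - i)).mulVec (gvec A b i)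
        = xd := by
  intro t
  induction t with
  | zero => intro _; simp [prodDesc, Matrix.one_mulVec]
  | succ t ih =>
    intro htm
    have ht : t < m := htm
    have H := ih (le_of_lt ht)
    have hlast : (prodDesc (Pnat A) (t + 1) (t + 1 - 1 - t)).mulVec (gvec A b t)
        = gvec A b t := by
      have h0 : t + 1 - 1 - t = 0 := by omega
      rw [h0]
      exact Matrix.one_mulVec _
    have hhead : prodDesc (Pnat A) 0 (t + 1) = Pnat A t * prodDesc (Pnat A) 0 t := by
      show Pnat A (0 + t) * prodDesc (Pnat A) 0 t = _
      rw [Nat.zero_add]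
    have hmid : ∀ i ∈ Finset.range t,
        (prodDesc (Pnat A) (i + 1) (t + 1 - 1 - i)).mulVec (gvec A b i)
          = (Pnat A t).mulVec ((prodDesc (Pnat A) (i + 1) (t - 1 - i)).mulVec (gvec A b i)) := by
      intro i hi
      have hi' : i < t := Finset.mem_range.mp hi
      have h1 : t + 1 - 1 - i = (t - 1 - i) + 1 := by omega
      have h2 : (i + 1) + (t - 1 - i) = t := by omega
      rw [h1]
      show ((Pnat A ((i + 1) + (t - 1 - i))) * prodDesc (Pnat A) (i + 1) (t - 1 - i)).mulVec _ = _
      rw [h2, ← Matrix.mulVec_mulVec]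
    rw [Finset.sum_range_succ, hlast, hhead, Finset.sum_congr rfl hmid,
      ← Matrix.mulVec_mulVec]
    have hsum : ∑ i ∈ Finset.range t,
        (Pnat A t).mulVec ((prodDesc (Pnat A) (i + 1) (t - 1 - i)).mulVec (gvec A b i))
        = (Pnat A t).mulVec
            (∑ i ∈ Finset.range t, (prodDesc (Pnat A) (i + 1) (t - 1 - i)).mulVec (gvec A b i)) := by
      simp only [← Matrix.mulVecLin_apply]
      exact (map_sum ((Pnat A t).mulVecLin) _ _).symm
    rw [← add_assoc, hsum, ← Matrix.mulVec_add, H]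
    have hP : Pnat A t = projMat (A ⟨t, ht⟩) := dif_pos ht
    have hb : A ⟨t, ht⟩ ⬝ᵥ xd = b ⟨t, ht⟩ := congrFun hxd ⟨t, ht⟩
    have hg : gvec A b t = ((A ⟨t, ht⟩ ⬝ᵥ A ⟨t, ht⟩)⁻¹ * b ⟨t, ht⟩) • A ⟨t, ht⟩ := dif_pos ht
    rw [hP, projMat_mulVec', hb, hg, sub_add_cancel]

lemma ASterm_eq {m n : ℕ} (A : Matrix (Fin m) (Fin n) ℝ) (b : Fin m → ℝ) :
    ((ASmat A)ᵀ * Mdiag A).mulVec b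
      = ∑ i ∈ Finset.range m, (prodDesc (Pnat A) (i + 1) (m - 1 - i)).mulVec (gvec A b i) := by
  have h1 : ((ASmat A)ᵀ * Mdiag A).mulVec b
      = ∑ i : Fin m, ((A i ⬝ᵥ A i)⁻¹ * b i) • ASmat A i := by
    funext j
    simp only [Matrix.mulVec, dotProduct, Mdiag, Matrix.mul_diagonal,
      Matrix.transpose_apply, Finset.sum_apply, Pi.smul_apply, smul_eq_mul]
    apply Finset.sum_congr rfl
    intro i _
    ring
  rw [h1, ← Fin.sum_univ_eq_sum_range
    (fun i => (prodDesc (Pnat A) (i + 1) (m - 1 - i)).mulVec (gvec A b i)) m]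
  apply Finset.sum_congr rfl
  intro i _
  have hg : gvec A b (i : ℕ) = ((A i ⬝ᵥ A i)⁻¹ * b i) • A i := by
    unfold gvec
    rw [dif_pos i.isLt]
  rw [hg, Matrix.mulVec_smul]
  rfl

lemma Qfull_fixed {m n : ℕ} (A : Matrix (Fin m) (Fin n) ℝ) (b : Fin m → ℝ) (xd : Fin n → ℝ)
    (hxd : A.mulVec xd = b) :
    (Qfull A).mulVec xd + ((ASmat A)ᵀ * Mdiag A).mulVec b = xd := by
  rw [ASterm_eq]
  exact sweep A b xd hxd m (le_refl m)

lemma vnorm_nonneg' {n : ℕ} (x : Fin n → ℝ) : 0 ≤ vnorm x := Real.sqrt_nonneg _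

lemma abs_le_vnorm {n : ℕ} (x : Fin n → ℝ) (i : Fin n) : |x i| ≤ vnorm x := by
  rw [vnorm, ← Real.sqrt_mul_self_eq_abs]
  apply Real.sqrt_le_sqrt
  exact Finset.single_le_sum (f := fun j => x j * x j)
    (fun j _ => mul_self_nonneg _) (Finset.mem_univ i)

/-- for the Kaczmarz-Tanabe iteration `y_{k+1} = Q y_k + A_Sᵀ M b` on a
consistent system, with `σ` the contraction factor of `Q` on `N(A)^⊥` (the maximal singular
value of `Q` strictly between 0 and 1), the errors `e_k = y_k - x† - P_{N(A)} y_0` satisfy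
`‖e_{k+1}‖ ≤ σ ‖e_k‖`, `‖e_k‖ ≤ σ^k ‖e_0‖`, and `y_k → x† + P_{N(A)} y_0`. -/
theorem stmt19 {m n : ℕ} (A : Matrix (Fin m) (Fin n) ℝ) (hA : ∀ i, A i ≠ 0)
    (b : Fin m → ℝ) (xd : Fin n → ℝ) (hxd : A.mulVec xd = b) (hxdperp : inNullPerp A xd)
    (y : ℕ → Fin n → ℝ) (p : Fin n → ℝ) (hpker : A.mulVec p = 0)
    (hp : inNullPerp A (y 0 - p))
    (hiter : ∀ k : ℕ,
      y (k + 1) = (Qfull A).mulVec (y k) + ((ASmat A)ᵀ * Mdiag A).mulVec b)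
    (σ : ℝ) (hσ0 : 0 ≤ σ) (hσ1 : σ < 1)
    (hσ : ∀ x : Fin n → ℝ, inNullPerp A x → vnorm ((Qfull A).mulVec x) ≤ σ * vnorm x)
    (e : ℕ → Fin n → ℝ) (he : ∀ k : ℕ, e k = y k - xd - p) :
    (∀ k : ℕ, vnorm (e (k + 1)) ≤ σ * vnorm (e k)) ∧
    (∀ k : ℕ, vnorm (e k) ≤ σ ^ k * vnorm (e 0)) ∧
    Filter.Tendsto y Filter.atTop (nhds (xd + p)) := by
  have heQ : ∀ k, e (k + 1) = (Qfull A).mulVec (e k) := by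
    intro k
    have hQp : (Qfull A).mulVec p = p := prodDesc_mulVec_fixed A hpker m 0
    rw [he (k + 1), he k, hiter k, Matrix.mulVec_sub, Matrix.mulVec_sub, hQp]
    have hQxd : (Qfull A).mulVec xd = xd - ((ASmat A)ᵀ * Mdiag A).mulVec b :=
      eq_sub_of_add_eq (Qfull_fixed A b xd hxd)
    rw [hQxd]
    abel
  have hperp : ∀ k, inNullPerp A (e k) := by
    intro k
    induction k with
    | zero =>
      intro z hz
      rw [he 0, sub_right_comm, sub_dotProduct, hp z hz, hxdperp z hz, sub_zero]
    | succ k ih =>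
      intro z hz
      rw [heQ k]
      rw [show ((Qfull A).mulVec (e k)) ⬝ᵥ z = (e k) ⬝ᵥ z from
        prodDesc_dot_perp A hz (e k) m 0]
      exact ih z hz
  have hc1 : ∀ k : ℕ, vnorm (e (k + 1)) ≤ σ * vnorm (e k) := by
    intro k
    rw [heQ k]
    exact hσ (e k) (hperp k)
  have hc2 : ∀ k : ℕ, vnorm (e k) ≤ σ ^ k * vnorm (e 0) := by
    intro k
    induction k with
    | zero => simp
    | succ k ih =>
      calc vnorm (e (k + 1)) ≤ σ * vnorm (e k) := hc1 k
        _ ≤ σ * (σ ^ k * vnorm (e 0)) := mul_le_mul_of_nonneg_left ih hσ0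
        _ = σ ^ (k + 1) * vnorm (e 0) := by ring
  refine ⟨hc1, hc2, ?_⟩
  have h0 : Tendsto (fun k => σ ^ k * vnorm (e 0)) atTop (nhds 0) := by
    have := (tendsto_pow_atTop_nhds_zero_of_lt_one hσ0 hσ1).mul_const (vnorm (e 0))
    simpa using this
  have hvn : Tendsto (fun k => vnorm (e k)) atTop (nhds 0) :=
    squeeze_zero (fun k => vnorm_nonneg' _) hc2 h0
  rw [tendsto_pi_nhds]
  intro i
  have hei : Tendsto (fun k => e k i) atTop (nhds 0) :=
    squeeze_zero_norm (fun k => by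
      simpa [Real.norm_eq_abs] using abs_le_vnorm (e k) i) hvn
  have h2 : Tendsto (fun k => e k i + (xd + p) i) atTop (nhds (0 + (xd + p) i)) :=
    hei.add_const _
  rw [zero_add] at h2
  refine h2.congr (fun k => ?_)
  rw [he k]
  simp only [Pi.sub_apply, Pi.add_apply]
  ring
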